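/- arXiv:2309.12866 — 4 statements merged into one kernel-verified Lean document; each statement's English description precedes it below -/
import Mathlib

section
/- Let G be a triangle-free graph on n vertices with maximum degree Δ, and suppose |E(G)| = Δ(n − Δ) with Δ ≥ 1. Then G is isomorphic to the complete bipartite graph K_{Δ, n−Δ}. -/
/-!
Let `u` be a vertex of maximum degree `Δ` and `A` its neighbourhood. Triangle-freeness makes `A`
independent, so `Aᶜ`, of size `n - Δ`, is a vertex cover and
`|E| ≤ ∑_{v ∈ Aᶜ} deg v ≤ Δ (n - Δ)`. Equality in the first step means every edge meets `Aᶜ`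
exactly once, so `Aᶜ` is independent as well; equality in the second means every `v ∈ Aᶜ` has
degree `Δ = |A|`, so its neighbourhood, which lies in `A`, is all of `A`.
-/

open Finset SimpleGraph

namespace SimpleGraph

variable {V : Type*} {G : SimpleGraph V}

def completeBipartiteGraphIsoOfAdjIff (p : V → Prop) [DecidablePred p]
    (h : ∀ x y, G.Adj x y ↔ (p x ↔ ¬p y)) :
    completeBipartiteGraph {x // p x} {x // ¬p x} ≃g G where
  toEquiv := Equiv.sumCompl p
  map_rel_iff' {a b} := by
    rcases a with ⟨x, hx⟩ | ⟨x, hx⟩ <;> rcases b with ⟨y, hy⟩ | ⟨y, hy⟩ <;> simp [h, hx, hy]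

theorem adj_iff_of_isIndepSet_of_neighborFinset_eq [Fintype V] [DecidableRel G.Adj]
    {A : Finset V} (hA : G.IsIndepSet A) (hN : ∀ v ∉ A, G.neighborFinset v = A) (x y : V) :
    G.Adj x y ↔ (x ∈ A ↔ y ∉ A) := by
  by_cases hx : x ∈ A
  · simp only [hx, true_iff]
    refine ⟨fun hxy hy => hA hx hy hxy.ne hxy, fun hy => ?_⟩
    rw [adj_comm, ← mem_neighborFinset, hN y hy]
    exact hx
  · simp only [hx, false_iff, not_not]
    rw [← mem_neighborFinset, hN x hx]

variable [Fintype V] [DecidableEq V] [DecidableRel G.Adj]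

theorem sum_degree_eq_sum_card_filter_mem (s : Finset V) :
    ∑ v ∈ s, G.degree v = ∑ e ∈ G.edgeFinset, #{v ∈ s | v ∈ e} := by
  simp_rw [← card_incidenceFinset_eq_degree, incidenceFinset_eq_filter]
  exact sum_card_bipartiteAbove_eq_sum_card_bipartiteBelow (· ∈ ·)

variable {s : Finset V}

theorem IsVertexCover.one_le_card_filter_mem (hs : G.IsVertexCover s) {e : Sym2 V}
    (he : e ∈ G.edgeFinset) : 1 ≤ #{v ∈ s | v ∈ e} := by
  induction e using Sym2.ind with
  | h v w =>
    obtain hv | hw := hs (mem_edgeFinset.1 he)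
    · exact card_pos.2 ⟨v, by simpa using hv⟩
    · exact card_pos.2 ⟨w, by simpa using hw⟩

theorem IsVertexCover.card_edgeFinset_le_sum_degree (hs : G.IsVertexCover s) :
    #G.edgeFinset ≤ ∑ v ∈ s, G.degree v := by
  rw [sum_degree_eq_sum_card_filter_mem, card_eq_sum_ones]
  exact sum_le_sum fun e he => hs.one_le_card_filter_mem he

theorem IsVertexCover.isIndepSet_of_sum_degree_eq (hs : G.IsVertexCover s)
    (h : ∑ v ∈ s, G.degree v = #G.edgeFinset) : G.IsIndepSet s := by
  rw [sum_degree_eq_sum_card_filter_mem, card_eq_sum_ones, eq_comm,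
    sum_eq_sum_iff_of_le fun e he => hs.one_le_card_filter_mem he] at h
  intro v hv w hw hne hadj
  have hvw : s(v, w) ∈ G.edgeFinset := mem_edgeFinset.2 hadj
  exact hne <| card_le_one.1 (h _ hvw).ge v (by simpa using hv) w (by simpa using hw)

theorem neighborFinset_eq_of_isIndepSet_compl {A : Finset V} (hB : G.IsIndepSet ↑Aᶜ) {v : V}
    (hv : v ∉ A) (hdeg : #A ≤ G.degree v) : G.neighborFinset v = A := by
  refine eq_of_subset_of_card_le (fun w hw => ?_) (by rwa [card_neighborFinset_eq_degree])
  have hvw : G.Adj v w := (mem_neighborFinset ..).1 hw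
  by_contra hwA
  exact hB (by simpa using hv) (by simpa using hwA) hvw.ne hvw

end SimpleGraph

/-- A triangle-free graph on `n` vertices with maximum degree `Δ ≥ 1` and exactly
`Δ * (n - Δ)` edges is isomorphic to the complete bipartite graph `K_{Δ, n-Δ}`. -/
theorem triangle_free_edge_bound_eq {V : Type*} [Fintype V] (G : SimpleGraph V)
    [DecidableRel G.Adj] (h : G.CliqueFree 3) (hΔ : 1 ≤ G.maxDegree)
    (he : G.edgeFinset.card = G.maxDegree * (Fintype.card V - G.maxDegree)) :
    Nonempty (G ≃g completeBipartiteGraph (Fin G.maxDegree)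
      (Fin (Fintype.card V - G.maxDegree))) := by
  classical
  have : Nonempty V := by
    by_contra hV
    rw [not_nonempty_iff] at hV
    simp at hΔ
  obtain ⟨u, hu⟩ := G.exists_maximal_degree_vertex
  set A := G.neighborFinset u
  have hA_card : #A = G.maxDegree := hu.symm
  have hAc_card : #Aᶜ = Fintype.card V - G.maxDegree := by rw [card_compl, hA_card]
  have hA : G.IsIndepSet A := by simpa [A] using isIndepSet_neighborSet_of_triangleFree G h u
  have hcover : G.IsVertexCover ↑Aᶜ := by simpa using hA
  have hsum_le : ∑ v ∈ Aᶜ, G.degree v ≤ ∑ _v ∈ Aᶜ, G.maxDegree :=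
    sum_le_sum fun v _ => G.degree_le_maxDegree v
  have hsum : ∑ v ∈ Aᶜ, G.degree v = #G.edgeFinset := by
    refine le_antisymm ?_ hcover.card_edgeFinset_le_sum_degree
    rwa [he, mul_comm, ← hAc_card, ← smul_eq_mul, ← sum_const]
  have hdeg : ∀ v ∈ Aᶜ, G.degree v = G.maxDegree := by
    refine (sum_eq_sum_iff_of_le fun v _ => G.degree_le_maxDegree v).1 (hsum_le.antisymm ?_)
    rw [hsum, he, sum_const, hAc_card, smul_eq_mul, mul_comm]
  have hN : ∀ v ∉ A, G.neighborFinset v = A := fun v hv =>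
    neighborFinset_eq_of_isIndepSet_compl (hcover.isIndepSet_of_sum_degree_eq hsum) hv
      (by rw [hA_card, hdeg v (mem_compl.2 hv)])
  have eA : {x // x ∈ A} ≃ Fin G.maxDegree :=
    Fintype.equivFinOfCardEq (by rw [Fintype.card_coe, hA_card])
  have eB : {x // x ∉ A} ≃ Fin (Fintype.card V - G.maxDegree) :=
    Fintype.equivFinOfCardEq (by rw [Fintype.card_subtype_compl, Fintype.card_coe, hA_card])
  exact ⟨(completeBipartiteGraphIsoOfAdjIff (· ∈ A)
    (adj_iff_of_isIndepSet_of_neighborFinset_eq hA hN)).symm.trans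
    (completeBipartiteGraphCongr eA eB)⟩
end

section
/- Fix integers d ≥ 0 and x ≥ 2 with d² ≤ (x−1)/16. Then (d+x−1)^{2d+2x−2} / (2 (2d+x−1)^{2d+x−1} (x−1)^{x−1}) > 2/5. -/
/-- For reals `d ≥ 0`, `x ≥ 2` with `16 d² ≤ x - 1`, the key ratio exceeds `2/5`. -/
theorem key_ratio_gt {d x : ℝ} (hd : 0 ≤ d) (hx : 2 ≤ x) (h : 16 * d ^ 2 ≤ x - 1) :
    (d + x - 1) ^ (2 * d + 2 * x - 2) /
      (2 * (2 * d + x - 1) ^ (2 * d + x - 1) * (x - 1) ^ (x - 1)) > 2 / 5 := by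
  have ha : (1:ℝ) ≤ x - 1 := by linarith
  have h1 : (0:ℝ) < d + x - 1 := by linarith
  have h2 : (0:ℝ) < 2 * d + x - 1 := by linarith
  have h3 : (0:ℝ) < x - 1 := by linarith
  set L1 := Real.log (d + x - 1) with hL1
  set L2 := Real.log (2 * d + x - 1) with hL2
  set L3 := Real.log (x - 1) with hL3
  -- key logarithmic bounds
  have k1 : Real.log ((2 * d + x - 1) / (d + x - 1)) ≤ (2 * d + x - 1) / (d + x - 1) - 1 :=
    Real.log_le_sub_one_of_pos (by positivity)
  have k2 : Real.log ((x - 1) / (d + x - 1)) ≤ (x - 1) / (d + x - 1) - 1 :=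
    Real.log_le_sub_one_of_pos (by positivity)
  rw [Real.log_div (ne_of_gt h2) (ne_of_gt h1)] at k1
  rw [Real.log_div (ne_of_gt h3) (ne_of_gt h1)] at k2
  have e1 : (2 * d + x - 1) / (d + x - 1) - 1 = d / (d + x - 1) := by
    field_simp <;> ring
  have e2 : (x - 1) / (d + x - 1) - 1 = -(d / (d + x - 1)) := by
    field_simp <;> ring
  rw [e1] at k1
  rw [e2] at k2
  -- F ≥ -1/8
  have hdiv : d / (d + x - 1) * (d + x - 1) = d := div_mul_cancel₀ d (ne_of_gt h1)
  have hF : (2 * d + 2 * x - 2) * L1 - (2 * d + x - 1) * L2 - (x - 1) * L3 ≥ -(1/8) := by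
    have A : (2 * d + x - 1) * (L2 - L1) ≤ (2 * d + x - 1) * (d / (d + x - 1)) :=
      mul_le_mul_of_nonneg_left k1 (le_of_lt h2)
    have B : (x - 1) * (L3 - L1) ≤ (x - 1) * (-(d / (d + x - 1))) :=
      mul_le_mul_of_nonneg_left k2 (le_of_lt h3)
    have C : 2 * d * (d / (d + x - 1)) ≤ 1/8 := by
      rw [mul_div_assoc', div_le_iff₀ h1]
      nlinarith
    nlinarith [A, B, C]
  -- assemble
  rw [Real.rpow_def_of_pos h1, Real.rpow_def_of_pos h2, Real.rpow_def_of_pos h3]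
  have key : Real.exp (L1 * (2 * d + 2 * x - 2)) /
      (2 * Real.exp (L2 * (2 * d + x - 1)) * Real.exp (L3 * (x - 1))) =
      Real.exp ((2 * d + 2 * x - 2) * L1 - (2 * d + x - 1) * L2 - (x - 1) * L3) / 2 := by
    rw [Real.exp_sub, Real.exp_sub]
    rw [mul_comm L1, mul_comm L2, mul_comm L3]
    field_simp <;> ring
  rw [key]
  have hexp : Real.exp ((2 * d + 2 * x - 2) * L1 - (2 * d + x - 1) * L2 - (x - 1) * L3) ≥ 7/8 := by
    have := Real.add_one_le_exp ((2 * d + 2 * x - 2) * L1 - (2 * d + x - 1) * L2 - (x - 1) * L3)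
    linarith
  linarith
end

section
/- Let H be a graph on m vertices and let G be a triangle-free graph on n vertices maximizing the number of injective embeddings of H among all triangle-free n-vertex graphs. Then for any two vertices u, v of G, h(v) ≤ h(u) + h(u, v), where h(u, v) denotes the number of injective embeddings whose image contains both u and v. -/
/-- The number of injective adjacency-preserving maps from `H` to `G`. -/
noncomputable def injEmbCount {α β : Type*} [Fintype α] [Fintype β]
    (H : SimpleGraph α) (G : SimpleGraph β) : ℕ :=
  Nat.card {f : α → β // Function.Injective f ∧ ∀ a b, H.Adj a b → G.Adj (f a) (f b)}

/-- The `H`-degree of a vertex `v` of `G`. -/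
noncomputable def hDeg {α β : Type*} [Fintype α] [Fintype β]
    (H : SimpleGraph α) (G : SimpleGraph β) (v : β) : ℕ :=
  Nat.card {f : α → β // Function.Injective f ∧ (∀ a b, H.Adj a b → G.Adj (f a) (f b)) ∧
    v ∈ Set.range f}

/-- The number of injective embeddings of `H` in `G` whose image contains both `u` and `v`. -/
noncomputable def hDeg2 {α β : Type*} [Fintype α] [Fintype β]
    (H : SimpleGraph α) (G : SimpleGraph β) (u v : β) : ℕ :=
  Nat.card {f : α → β // Function.Injective f ∧ (∀ a b, H.Adj a b → G.Adj (f a) (f b)) ∧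
    u ∈ Set.range f ∧ v ∈ Set.range f}

/-!
Let `G'` be `G` with `u` replaced by a non-adjacent twin of `v`; like `G`, it is triangle-free.
Every embedding of `H` into `G` avoiding `u` is still an embedding into `G'`, and so is every
embedding avoiding `u` but hitting `v` once `u` and `v` are swapped; the latter all hit `u`, so the
two families are disjoint. Hence `#emb(G') ≥ (#emb(G) - h(u)) + (h(v) - h(u,v))`, and maximality
of `G` gives the claim.
-/

namespace SimpleGraph

variable {α β : Type*}

def injEmbSet (H : SimpleGraph α) (G : SimpleGraph β) : Set (α → β) :=
  {f | Function.Injective f ∧ ∀ a b, H.Adj a b → G.Adj (f a) (f b)}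

section ReplaceVertex

variable [DecidableEq β] {H : SimpleGraph α} {G : SimpleGraph β} {s t : β}

theorem replaceVertex_adj_swap_iff {x y : β} (hx : x ≠ t) (hy : y ≠ t) :
    (G.replaceVertex s t).Adj (Equiv.swap s t x) (Equiv.swap s t y) ↔ G.Adj x y := by
  simp only [replaceVertex, Equiv.swap_apply_def]
  split_ifs <;> simp_all [adj_comm]

theorem mem_injEmbSet_replaceVertex {f : α → β} (hf : f ∈ injEmbSet H G)
    (ht : t ∉ Set.range f) : f ∈ injEmbSet H (G.replaceVertex s t) :=
  ⟨hf.1, fun a b hab =>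
    (G.adj_replaceVertex_iff_of_ne s (fun h => ht ⟨a, h⟩) (fun h => ht ⟨b, h⟩)).2 (hf.2 a b hab)⟩

theorem swap_comp_mem_injEmbSet_replaceVertex {f : α → β} (hf : f ∈ injEmbSet H G)
    (ht : t ∉ Set.range f) : Equiv.swap s t ∘ f ∈ injEmbSet H (G.replaceVertex s t) :=
  ⟨(Equiv.swap s t).injective.comp hf.1, fun a b hab =>
    (replaceVertex_adj_swap_iff (fun h => ht ⟨a, h⟩) (fun h => ht ⟨b, h⟩)).2 (hf.2 a b hab)⟩

end ReplaceVertex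

variable [Fintype α] [Fintype β] (H : SimpleGraph α) (G : SimpleGraph β)

theorem injEmbCount_eq_ncard : injEmbCount H G = (injEmbSet H G).ncard := rfl

theorem hDeg_eq_ncard (v : β) :
    hDeg H G v = (injEmbSet H G ∩ {f | v ∈ Set.range f}).ncard :=
  Nat.card_congr (Equiv.subtypeEquivRight fun _ => and_assoc.symm)

theorem hDeg2_eq_ncard (u v : β) :
    hDeg2 H G u v =
      (injEmbSet H G ∩ {f | u ∈ Set.range f} ∩ {f | v ∈ Set.range f}).ncard :=
  Nat.card_congr (Equiv.subtypeEquivRight fun _ => by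
    simp only [injEmbSet, Set.mem_inter_iff, Set.mem_ofPred_eq, and_assoc])

variable [DecidableEq β]

theorem ncard_avoiding_add_le_injEmbCount_replaceVertex (s t : β) :
    (injEmbSet H G \ {f | t ∈ Set.range f}).ncard +
        ((injEmbSet H G ∩ {f | s ∈ Set.range f}) \ {f | t ∈ Set.range f}).ncard ≤
      injEmbCount H (G.replaceVertex s t) := by
  set A := injEmbSet H G \ {f | t ∈ Set.range f}
  set B := (injEmbSet H G ∩ {f | s ∈ Set.range f}) \ {f | t ∈ Set.range f}
  have hdisj : Disjoint A ((Equiv.swap s t ∘ ·) '' B) := by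
    rw [Set.disjoint_left]
    rintro _ ⟨-, ht⟩ ⟨f, ⟨⟨-, a, hfa⟩, -⟩, rfl⟩
    exact ht ⟨a, by simp [hfa]⟩
  have hsub : A ∪ (Equiv.swap s t ∘ ·) '' B ⊆ injEmbSet H (G.replaceVertex s t) := by
    rintro _ (⟨hf, ht⟩ | ⟨f, ⟨⟨hf, -⟩, ht⟩, rfl⟩)
    exacts [mem_injEmbSet_replaceVertex hf ht, swap_comp_mem_injEmbSet_replaceVertex hf ht]
  calc A.ncard + B.ncard = (A ∪ (Equiv.swap s t ∘ ·) '' B).ncard := by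
        rw [Set.ncard_union_eq hdisj,
          Set.ncard_image_of_injective _ (Equiv.swap s t).injective.comp_left]
    _ ≤ _ := Set.ncard_le_ncard hsub

theorem injEmbCount_add_hDeg_le_injEmbCount_replaceVertex (s t : β) :
    injEmbCount H G + hDeg H G s ≤
      injEmbCount H (G.replaceVertex s t) + hDeg H G t + hDeg2 H G t s := by
  have hsplit := Set.ncard_inter_add_ncard_sdiff_eq_ncard (injEmbSet H G) {f | t ∈ Set.range f}
  have hsplit_s := Set.ncard_inter_add_ncard_sdiff_eq_ncard
    (injEmbSet H G ∩ {f | s ∈ Set.range f}) {f | t ∈ Set.range f}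
  have hinj := ncard_avoiding_add_le_injEmbCount_replaceVertex H G s t
  rw [Set.inter_right_comm] at hsplit_s
  rw [injEmbCount_eq_ncard, hDeg_eq_ncard, hDeg_eq_ncard, hDeg2_eq_ncard]
  omega

end SimpleGraph

/-- If `G` is a triangle-free graph on `n` vertices maximizing the number of injective
embeddings of `H` among triangle-free graphs on `n` vertices, then for any vertices
`u, v` we have `h(v) ≤ h(u) + h(u,v)`. -/
theorem hDeg_almost_equal {α : Type*} [Fintype α] (H : SimpleGraph α) (n : ℕ)
    (G : SimpleGraph (Fin n)) (hG : G.CliqueFree 3)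
    (hmax : ∀ G' : SimpleGraph (Fin n), G'.CliqueFree 3 →
      injEmbCount H G' ≤ injEmbCount H G)
    (u v : Fin n) :
    hDeg H G v ≤ hDeg H G u + hDeg2 H G u v := by
  have hcount := SimpleGraph.injEmbCount_add_hDeg_le_injEmbCount_replaceVertex H G v u
  have hle := hmax _ (hG.replaceVertex v u)
  omega
end

section
/- Let H be a bipartite graph on m vertices without isolated vertices, whose maximal matchings all have size x, and let G be a triangle-free graph on n vertices with minimum degree δ and maximum degree Δ. Then for a vertex u of minimum degree, the number of injective embeddings of H into G whose image contains u is at most m · δ · 2^{c−1} · |E(G)|^{x−1} · Δ^{m−2x}, where c is the number of connected components of H. -/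
/-- `M` is a matching in `H`: a set of edges of `H` that are pairwise disjoint. -/
def IsMatchingSet {V : Type*} (H : SimpleGraph V) (M : Finset (Sym2 V)) : Prop :=
  (M : Set (Sym2 V)) ⊆ H.edgeSet ∧
    (M : Set (Sym2 V)).Pairwise fun e f => ∀ v, v ∈ e → v ∉ f

/-!
An embedding whose image contains `u` sends some vertex `a` of `H` to `u`, so it suffices to
bound, for each `a`, the homomorphisms `f : H →g G` with `f a = u`. Fix a maximal matching `M`,
an edge `e₀ ∈ M` with an endpoint `s` adjacent to `a` (the edge at `a` if `a` is matched), a root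
in every component (`a` in its own, a matched vertex elsewhere) and a breadth-first parent for
every other vertex. Then `f` is determined by `f s ∈ N(u)` (`δ` choices), the unordered images
of the `x - 1` edges of `M ∖ {e₀}` (`|E(G)|` each), the orientation of the image of the matching
edge at each of the other `c - 1` roots (one bit each), and the images of the remaining `m - 2x`
vertices, each a neighbour of the image of its parent (`Δ` each). Decoding runs outwards from
the roots: a matched non-root vertex `v` is recovered from the unordered image `{f v, f w}` of
its matching edge because `f v` is adjacent to the already known image of its parent, and if
`f w` were too, `G` would contain a triangle.
-/

section

open Finset

variable {α β : Type*}

lemma Sym2.eq_of_lt_iff_lt [LinearOrder β] {x y x' y' : β} (h : s(x, y) = s(x', y'))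
    (hxy : x ≠ y) (hlt : x < y ↔ x' < y') : x = x' := by
  rcases Sym2.eq_iff.1 h with ⟨h₁, -⟩ | ⟨rfl, rfl⟩
  · exact h₁
  · rcases hxy.lt_or_gt with h₁ | h₁
    exacts [(h₁.asymm (hlt.1 h₁)).elim, (h₁.asymm (hlt.2 h₁)).elim]

namespace SimpleGraph

lemma CliqueFree.eq_of_adj_of_sym2_eq {G : SimpleGraph β} (hG : G.CliqueFree 3)
    {p x y x' y' : β} (hx : G.Adj p x) (hx' : G.Adj p x') (hxy : G.Adj x y)
    (h : s(x, y) = s(x', y')) : x = x' := by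
  rcases Sym2.eq_iff.1 h with ⟨h₁, -⟩ | ⟨-, rfl⟩
  · exact h₁
  · classical
    exact (hG _ (is3Clique_triple_iff.2 ⟨hx, hx', hxy⟩)).elim

lemma Reachable.exists_adj_dist_lt {H : SimpleGraph α} {r v : α} (hr : H.Reachable r v)
    (hne : v ≠ r) : ∃ w, H.Adj w v ∧ H.dist r w < H.dist r v := by
  obtain ⟨q, hq⟩ := hr.symm.exists_walk_length_eq_dist
  obtain ⟨w, hvw, q', rfl⟩ := Walk.exists_eq_cons_of_ne hne q
  refine ⟨w, hvw.symm, ?_⟩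
  rw [dist_comm, dist_comm (u := r)]
  have := dist_le q'
  simp only [Walk.length_cons] at hq
  omega

lemma exists_parent (H : SimpleGraph α) (r : H.ConnectedComponent → α)
    (hr : ∀ C, H.connectedComponentMk (r C) = C) :
    ∃ (p : α → α) (d : α → ℕ), ∀ v ∉ Set.range r, H.Adj (p v) v ∧ d (p v) < d v := by
  let d v := H.dist (r (H.connectedComponentMk v)) v
  have : ∀ v, ∃ w, v ∉ Set.range r → H.Adj w v ∧ d w < d v := by
    intro v
    by_cases hv : v ∈ Set.range r
    · exact ⟨v, fun h => (h hv).elim⟩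
    have hreach := ConnectedComponent.exact (hr (H.connectedComponentMk v))
    obtain ⟨w, hwv, hlt⟩ := hreach.exists_adj_dist_lt fun h => hv ⟨_, h.symm⟩
    refine ⟨w, fun _ => ⟨hwv, ?_⟩⟩
    simpa only [d, ConnectedComponent.connectedComponentMk_eq_of_adj hwv] using hlt
  choose p hp using this
  exact ⟨p, d, hp⟩

end SimpleGraph

def coveredVerts [DecidableEq α] (M : Finset (Sym2 α)) : Finset α := M.biUnion Sym2.toFinset

lemma mem_coveredVerts [DecidableEq α] {M : Finset (Sym2 α)} {v : α} :
    v ∈ coveredVerts M ↔ ∃ e ∈ M, v ∈ e := by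
  simp [coveredVerts]

namespace IsMatchingSet

variable {H : SimpleGraph α} {M N : Finset (Sym2 α)}

lemma eq_of_mem_of_mem (hM : IsMatchingSet H M) {e f : Sym2 α} {v : α} (he : e ∈ M)
    (hf : f ∈ M) (hve : v ∈ e) (hvf : v ∈ f) : e = f :=
  by_contra fun hne => hM.2 he hf hne v hve hvf

lemma subset (hM : IsMatchingSet H M) (hNM : N ⊆ M) : IsMatchingSet H N :=
  ⟨fun _ he => hM.1 (hNM he), hM.2.mono (coe_subset.2 hNM)⟩

lemma insert_edge [DecidableEq α] (hM : IsMatchingSet H M) {v w : α} (hvw : H.Adj v w)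
    (hv : ∀ e ∈ M, v ∉ e) (hw : ∀ e ∈ M, w ∉ e) : IsMatchingSet H (insert s(v, w) M) := by
  have hvw' : ∀ e ∈ M, ∀ z ∈ s(v, w), z ∉ e := by
    rintro e he z hz
    rcases Sym2.mem_iff.1 hz with rfl | rfl
    exacts [hv e he, hw e he]
  refine ⟨?_, ?_⟩
  · rw [coe_insert]
    exact Set.insert_subset hvw hM.1
  · rw [coe_insert, Set.pairwise_insert]
    exact ⟨hM.2, fun e he _ => ⟨hvw' e he, fun z hze hz => hvw' e he z hz hze⟩⟩

lemma card_coveredVerts [DecidableEq α] (hM : IsMatchingSet H M) :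
    #(coveredVerts M) = 2 * #M := by
  rw [coveredVerts, card_biUnion, sum_const_nat, mul_comm]
  · exact fun e he => Sym2.card_toFinset_of_not_isDiag e (H.not_isDiag_of_mem_edgeSet (hM.1 he))
  · exact fun e he f hf hne => disjoint_left.2 fun v hve hvf =>
      hM.2 he hf hne v (Sym2.mem_toFinset.1 hve) (Sym2.mem_toFinset.1 hvf)

lemma card_insert_insert_coveredVerts_erase [DecidableEq α] (hM : IsMatchingSet H M)
    {e₀ : Sym2 α} (he₀ : e₀ ∈ M) {a s : α} (hs : s ∈ e₀) (has : a ≠ s)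
    (ha : ∀ e ∈ M, a ∈ e → e = e₀) :
    #(insert a (insert s (coveredVerts (M.erase e₀)))) = 2 * #M := by
  have hs' : s ∉ coveredVerts (M.erase e₀) := fun h => by
    obtain ⟨e, he, hse⟩ := mem_coveredVerts.1 h
    exact (mem_erase.1 he).1 (hM.eq_of_mem_of_mem (mem_of_mem_erase he) he₀ hse hs)
  have ha' : a ∉ insert s (coveredVerts (M.erase e₀)) := by
    rw [mem_insert, mem_coveredVerts, not_or]
    exact ⟨has, fun ⟨e, he, hae⟩ => (mem_erase.1 he).1 (ha e (mem_of_mem_erase he) hae)⟩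
  rw [card_insert_of_notMem ha', card_insert_of_notMem hs',
    (hM.subset (erase_subset _ _)).card_coveredVerts, card_erase_of_mem he₀]
  have := card_pos.2 ⟨e₀, he₀⟩
  omega

lemma exists_mem_of_maximal (hM : Maximal (IsMatchingSet H) M) {v w : α} (hvw : H.Adj v w) :
    ∃ e ∈ M, v ∈ e ∨ w ∈ e := by
  classical
  by_contra! h
  have hins := hM.2 (hM.1.insert_edge hvw (fun e he => (h e he).1) (fun e he => (h e he).2))
    (subset_insert _ _)
  exact (h _ (hins (mem_insert_self _ _))).1 (Sym2.mem_mk_left v w)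

lemma exists_adj_mem_of_maximal (hM : Maximal (IsMatchingSet H) M) {a b : α}
    (hab : H.Adj a b) : ∃ e₀ ∈ M, ∃ s ∈ e₀, H.Adj a s ∧ ∀ e ∈ M, a ∈ e → e = e₀ := by
  by_cases ha : ∃ e ∈ M, a ∈ e
  · obtain ⟨e₀, he₀, hae₀⟩ := ha
    obtain ⟨s, rfl⟩ := Sym2.mem_iff_exists.1 hae₀
    exact ⟨_, he₀, s, Sym2.mem_mk_right a s, hM.1.1 he₀,
      fun e he hae => hM.1.eq_of_mem_of_mem he he₀ hae hae₀⟩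
  · push Not at ha
    obtain ⟨e₀, he₀, hb⟩ := exists_mem_of_maximal hM hab
    exact ⟨e₀, he₀, b, hb.resolve_left (ha e₀ he₀), hab, fun e he hae => (ha e he hae).elim⟩

lemma exists_roots_of_maximal [DecidableEq α] (hM : Maximal (IsMatchingSet H) M)
    (hniso : ∀ v, ∃ w, H.Adj v w) {e₀ : Sym2 α} {a s : α} (hs : s ∈ e₀) (has : H.Adj a s) :
    ∃ r t : H.ConnectedComponent → α, (∀ C, H.connectedComponentMk (r C) = C) ∧
      r (H.connectedComponentMk a) = a ∧
      ∀ C ≠ H.connectedComponentMk a, s(r C, t C) ∈ M.erase e₀ := by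
  classical
  have : ∀ C : H.ConnectedComponent, ∃ v t, H.connectedComponentMk v = C ∧ s(v, t) ∈ M := by
    refine fun C => C.ind fun v => ?_
    obtain ⟨w, hvw⟩ := hniso v
    obtain ⟨e, he, hv | hw⟩ := exists_mem_of_maximal hM hvw
    · obtain ⟨t, rfl⟩ := Sym2.mem_iff_exists.1 hv
      exact ⟨v, t, rfl, he⟩
    · obtain ⟨t, rfl⟩ := Sym2.mem_iff_exists.1 hw
      exact ⟨w, t, (SimpleGraph.ConnectedComponent.connectedComponentMk_eq_of_adj hvw).symm, he⟩
  choose r t hr ht using this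
  refine ⟨Function.update r (H.connectedComponentMk a) a, t, fun C => ?_,
    Function.update_self .., fun C hC => ?_⟩
  · by_cases hC : C = H.connectedComponentMk a
    · subst hC
      simp
    · simp [Function.update_of_ne hC, hr]
  · rw [Function.update_of_ne hC]
    refine mem_erase.2 ⟨?_, ht C⟩
    rintro rfl
    have hrt : H.Adj (r C) (t C) := hM.1.1 (ht C)
    apply hC
    rw [← hr C, SimpleGraph.ConnectedComponent.connectedComponentMk_eq_of_adj has]
    rcases Sym2.mem_iff.1 hs with rfl | rfl
    · rfl
    · exact SimpleGraph.ConnectedComponent.connectedComponentMk_eq_of_adj hrt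

end IsMatchingSet

namespace SimpleGraph

variable {H : SimpleGraph α} {G : SimpleGraph β}

lemma CliqueFree.hom_ext_of_parent [LinearOrder β] (hG : G.CliqueFree 3)
    {M : Finset (Sym2 α)} (hMH : ∀ e ∈ M, e ∈ H.edgeSet) {K R : Set α} {p : α → α}
    {d : α → ℕ} (hp : ∀ v ∉ R, H.Adj (p v) v ∧ d (p v) < d v) {f g : H →g G}
    (hK : ∀ v ∈ K, f v = g v) (hM : ∀ e ∈ M, e.map f = e.map g)
    (hR : ∀ v ∈ R, v ∉ K → ∃ w, s(v, w) ∈ M ∧ (f v < f w ↔ g v < g w))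
    (hS : ∀ v ∉ K, v ∉ R → (∀ e ∈ M, v ∉ e) → f (p v) = g (p v) → f v = g v) : f = g := by
  suffices ∀ n v, d v = n → f v = g v from DFunLike.ext _ _ fun v => this _ v rfl
  intro n
  induction n using Nat.strong_induction_on with
  | _ n ih =>
  rintro v rfl
  by_cases hvK : v ∈ K
  · exact hK v hvK
  by_cases hvR : v ∈ R
  · obtain ⟨w, hvw, hlt⟩ := hR v hvR hvK
    exact Sym2.eq_of_lt_iff_lt (hM _ hvw) (f.map_adj (hMH _ hvw)).ne hlt
  obtain ⟨hpv, hdp⟩ := hp v hvR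
  have hpar : f (p v) = g (p v) := ih _ hdp _ rfl
  by_cases hcov : ∃ e ∈ M, v ∈ e
  · obtain ⟨e, he, hve⟩ := hcov
    obtain ⟨w, rfl⟩ := Sym2.mem_iff_exists.1 hve
    exact hG.eq_of_adj_of_sym2_eq (f.map_adj hpv) (hpar ▸ g.map_adj hpv)
      (f.map_adj (hMH _ he)) (hM _ he)
  · push Not at hcov
    exact hS v hvK hvR hcov hpar

variable [Fintype α] [Fintype β]

noncomputable def neighborIndex (G : SimpleGraph β) [DecidableRel G.Adj] (w : β) :
    G.neighborFinset w ↪ Fin G.maxDegree :=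
  (Fintype.equivFin _).toEmbedding.trans
    (Fin.castLEEmb ((Fintype.card_coe _).trans_le (G.degree_le_maxDegree w)))

lemma eq_of_neighborIndex_eq [DecidableRel G.Adj] {w w' z z' : β}
    (hz : z ∈ G.neighborFinset w) (hz' : z' ∈ G.neighborFinset w') (hw : w = w')
    (h : G.neighborIndex w ⟨z, hz⟩ = G.neighborIndex w' ⟨z', hz'⟩) : z = z' := by
  subst hw
  exact congrArg Subtype.val ((G.neighborIndex w).injective h)

lemma hDeg_le_sum_card_hom (u : β) : hDeg H G u ≤ ∑ a, Nat.card {f : H →g G // f a = u} := by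
  rw [← Nat.card_sigma]
  refine Nat.card_le_card_of_injective
    (fun F => ⟨F.2.2.2.choose, ⟨F.1, F.2.2.1 _ _⟩, F.2.2.2.choose_spec⟩) fun F F' h => ?_
  exact Subtype.ext (congrArg (fun q : Σ a, {f : H →g G // f a = u} => ⇑q.2.1) h)

lemma card_hom_apply_eq_le_card_prod [DecidableEq α] [DecidableRel G.Adj]
    (hG : G.CliqueFree 3) (hniso : ∀ v, ∃ w, H.Adj v w) {M : Finset (Sym2 α)}
    (hM : Maximal (IsMatchingSet H) M) {e₀ : Sym2 α} {a s : α} (hs : s ∈ e₀)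
    (has : H.Adj a s) (u : β) :
    Nat.card {f : H →g G // f a = u} ≤ Nat.card (G.neighborFinset u ×
      (M.erase e₀ → G.edgeFinset) × ({C // C ≠ H.connectedComponentMk a} → Bool) ×
      (((insert a (insert s (coveredVerts (M.erase e₀))))ᶜ : Finset α) → Fin G.maxDegree)) := by
  obtain ⟨r, t, hr, hra, hrt⟩ := IsMatchingSet.exists_roots_of_maximal hM hniso hs has
  obtain ⟨p, d, hp⟩ := H.exists_parent r hr
  let : LinearOrder β := LinearOrder.lift' _ (Fintype.equivFin β).injective
  set M' := M.erase e₀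
  set S : Finset α := (insert a (insert s (coveredVerts M')))ᶜ
  have hSr : ∀ v ∈ S, v ∉ Set.range r := by
    rintro v hv ⟨C, rfl⟩
    simp only [S, mem_compl, mem_insert, mem_coveredVerts, not_or, not_exists, not_and] at hv
    by_cases hC : C = H.connectedComponentMk a
    · exact hv.1 (hC ▸ hra)
    · exact hv.2.2 _ (hrt C hC) (Sym2.mem_mk_left _ _)
  refine Nat.card_le_card_of_injective (fun f =>
    (⟨f.1 s, by simpa [f.2] using f.1.map_adj has⟩,
      fun e => ⟨e.1.map f.1,
        mem_edgeFinset.2 (f.1.map_mem_edgeSet (hM.1.1 (mem_of_mem_erase e.2)))⟩,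
      fun C => decide (f.1 (r C) < f.1 (t C)),
      fun v => G.neighborIndex (f.1 (p v))
        ⟨f.1 v, (mem_neighborFinset _ _ _).2 (f.1.map_adj (hp v (hSr v v.2)).1)⟩)) ?_
  intro f g hfg
  simp only [Prod.mk.injEq, funext_iff, Subtype.ext_iff] at hfg
  obtain ⟨h₁, h₂, h₃, h₄⟩ := hfg
  refine Subtype.ext (hG.hom_ext_of_parent (M := M') (K := {a, s}) (R := Set.range r)
    (fun e he => hM.1.1 (mem_of_mem_erase he)) hp ?_ (fun e he => h₂ ⟨e, he⟩) ?_ ?_)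
  · rintro v (rfl | rfl)
    exacts [f.2.trans g.2.symm, h₁]
  · rintro _ ⟨C, rfl⟩ hCK
    have hC : C ≠ H.connectedComponentMk a := by
      rintro rfl
      exact hCK (Or.inl hra)
    exact ⟨t C, hrt C hC, decide_eq_decide.1 (h₃ ⟨C, hC⟩)⟩
  · intro v hvK _ hcov hpar
    have hvS : v ∈ S := by
      simp only [S, mem_compl, mem_insert, mem_coveredVerts]
      simp_all
    exact eq_of_neighborIndex_eq _ _ hpar (h₄ ⟨v, hvS⟩)

theorem card_hom_apply_eq_le [DecidableRel G.Adj] (hG : G.CliqueFree 3)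
    (hniso : ∀ v, ∃ w, H.Adj v w) {M : Finset (Sym2 α)} (hM : Maximal (IsMatchingSet H) M)
    (a : α) (u : β) :
    Nat.card {f : H →g G // f a = u} ≤ G.degree u * 2 ^ (Nat.card H.ConnectedComponent - 1) *
      #G.edgeFinset ^ (#M - 1) * G.maxDegree ^ (Fintype.card α - 2 * #M) := by
  classical
  obtain ⟨b, hab⟩ := hniso a
  obtain ⟨e₀, he₀, s, hs, has, ha⟩ := IsMatchingSet.exists_adj_mem_of_maximal hM hab
  refine (card_hom_apply_eq_le_card_prod hG hniso hM hs has u).trans_eq ?_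
  simp only [Nat.card_eq_fintype_card, Fintype.card_prod, Fintype.card_fun, Fintype.card_coe,
    card_neighborFinset_eq_degree, Fintype.card_bool, Fintype.card_fin,
    Fintype.card_subtype_compl, Fintype.card_subtype_eq, card_erase_of_mem he₀, card_compl,
    IsMatchingSet.card_insert_insert_coveredVerts_erase hM.1 he₀ hs has.ne ha]
  ring

end SimpleGraph

end

theorem hDeg_min_degree_bound_general {α β : Type*} [Fintype α] [DecidableEq α] [Fintype β]
    (H : SimpleGraph α) (G : SimpleGraph β) [DecidableRel G.Adj] (x : ℕ)
    (hniso : ∀ v : α, ∃ w, H.Adj v w)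
    (hmatch : ∀ M : Finset (Sym2 α), IsMatchingSet H M →
      (∀ e ∈ H.edgeSet, e ∉ M → ¬ IsMatchingSet H (insert e M)) → M.card = x)
    (hG : G.CliqueFree 3) (u : β) (hu : G.degree u = G.minDegree) :
    hDeg H G u ≤ Fintype.card α * G.minDegree * 2 ^ (Nat.card H.ConnectedComponent - 1)
      * G.edgeFinset.card ^ (x - 1) * G.maxDegree ^ (Fintype.card α - 2 * x) := by
  obtain ⟨M, -, hM⟩ := Finite.exists_le_maximal (p := IsMatchingSet H) (a := ∅) ⟨by simp, by simp⟩
  have hx : M.card = x := hmatch M hM.1 fun e _ heM hins =>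
    heM (hM.2 hins (Finset.subset_insert e M) (Finset.mem_insert_self e M))
  calc hDeg H G u ≤ ∑ a, Nat.card {f : H →g G // f a = u} := SimpleGraph.hDeg_le_sum_card_hom u
    _ ≤ ∑ _a : α, G.degree u * 2 ^ (Nat.card H.ConnectedComponent - 1) *
          G.edgeFinset.card ^ (M.card - 1) * G.maxDegree ^ (Fintype.card α - 2 * M.card) :=
        Finset.sum_le_sum fun a _ => SimpleGraph.card_hom_apply_eq_le hG hniso hM a u
    _ = _ := by rw [Finset.sum_const, Finset.card_univ, smul_eq_mul, hu, hx]; ring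

/-- Let `H` be bipartite on `m` vertices without isolated vertices, all of whose maximal
matchings have size `x`, and let `G` be triangle-free with minimum degree `δ` and maximum
degree `Δ`. Then the number of injective embeddings of `H` into `G` whose image contains
a vertex `u` of minimum degree is at most `m δ 2^{c-1} |E(G)|^{x-1} Δ^{m-2x}`. -/
theorem hDeg_min_degree_bound {α β : Type*} [Fintype α] [DecidableEq α] [Fintype β]
    (H : SimpleGraph α) (G : SimpleGraph β) [DecidableRel G.Adj] (x : ℕ)
    (hbip : H.Colorable 2) (hniso : ∀ v : α, ∃ w, H.Adj v w)
    (hmatch : ∀ M : Finset (Sym2 α), IsMatchingSet H M →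
      (∀ e ∈ H.edgeSet, e ∉ M → ¬ IsMatchingSet H (insert e M)) → M.card = x)
    (hG : G.CliqueFree 3) (u : β) (hu : G.degree u = G.minDegree) :
    hDeg H G u ≤ Fintype.card α * G.minDegree * 2 ^ (Nat.card H.ConnectedComponent - 1)
      * G.edgeFinset.card ^ (x - 1) * G.maxDegree ^ (Fintype.card α - 2 * x) :=
  hDeg_min_degree_bound_general H G x hniso hmatch hG u hu
end
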